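/- Let b_1,…,b_N ∈ ℤ² be nonzero vectors spanning ℝ² with b_1+…+b_N = 0. Let C and C' be two adjacent 2-dimensional cones of the secondary fan whose intersection C ∩ C' is a ray ρ, let I = {i ∈ {1,…,N} : b_i ∈ ρ}, and suppose C lies to the right of ρ and C' to the left, i.e., det(b_i, x) ≤ 0 for all i ∈ I and x ∈ C, and det(b_i, x) ≥ 0 for all i ∈ I and x ∈ C'. Then ψ_{C'} − ψ_C = Σ_{i ∈ I} Σ_{k=1}^N det(b_i,b_k)·e_k in ℤ^N, where e_1,…,e_N is the standard basis of ℤ^N. -/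

import Mathlib

noncomputable section
open scoped Classical

/-- `det(u,v) = u₁v₂ - v₁u₂` for `u, v ∈ ℝ²`. -/
def det2 (u v : ℝ × ℝ) : ℝ := u.1 * v.2 - v.1 * u.2

/-- `det(u,v)` for integer vectors. -/
def detZ (u v : ℤ × ℤ) : ℤ := u.1 * v.2 - v.1 * u.2

/-- The canonical embedding `ℤ² → ℝ²`. -/
def toR2 (v : ℤ × ℤ) : ℝ × ℝ := ((v.1 : ℝ), (v.2 : ℝ))

/-- The ray `ℝ_{≥0}·v`. -/
def rayThru (v : ℝ × ℝ) : Set (ℝ × ℝ) := {x | ∃ t : ℝ, 0 ≤ t ∧ x = t • v}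

/-- `C` is a 2-dimensional cone of the secondary fan of `b`. -/
def IsSecCone {N : ℕ} (b : Fin N → ℝ × ℝ) (C : Set (ℝ × ℝ)) : Prop :=
  ∃ x ∈ (⋃ i, rayThru (b i))ᶜ,
    C = closure (connectedComponentIn ((⋃ i, rayThru (b i))ᶜ) x)

/-- The cone `ℝ_{≥0}·u + ℝ_{≥0}·v`. -/
def posCone (u v : ℝ × ℝ) : Set (ℝ × ℝ) :=
  {x | ∃ s t : ℝ, 0 ≤ s ∧ 0 ≤ t ∧ x = s • u + t • v}

/-- `ψ_C = Σ_{{i,j} ∈ L_C} |det(b i, b j)|·(e i + e j) ∈ ℤ^N`. -/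
noncomputable def psiC {N : ℕ} (b : Fin N → ℤ × ℤ) (C : Set (ℝ × ℝ)) : Fin N → ℤ :=
  ∑ i, ∑ j,
    if i < j ∧ C ⊆ posCone (toR2 (b i)) (toR2 (b j)) then
      |detZ (b i) (b j)| • (Pi.single i 1 + Pi.single j 1) else 0

/-! If `det(b i, b j) ≠ 0`, then `posCone (b i) (b j)` without its two boundary rays is open, and
it is relatively closed in the complement of the rays `ℝ≥0 b k`; so every secondary cone lies
entirely inside or entirely outside it. Hence `{i, j}` lies in both or in neither of `L_C` and
`L_{C'}` unless `b i` or `b j` lies on `ρ`, and if `b i ∈ ρ`, then `{i, j} ∈ L_{C'}` iff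
`det(b i, b j) > 0` while `{i, j} ∈ L_C` iff `det(b i, b j) < 0`. The coefficient of `e k` in
`ψ_{C'} - ψ_C` is therefore `Σ_{i ∈ I} det(b i, b k)` if `b k ∉ ρ`, and `Σ_j det(b k, b j) =
det(b k, Σ_j b j) = 0` if `b k ∈ ρ`, as is the right-hand side, the vectors on `ρ` being
parallel. -/

lemma det2_toR2 (a c : ℤ × ℤ) : det2 (toR2 a) (toR2 c) = detZ a c := by
  simp [det2, detZ, toR2]

lemma detZ_comm (a c : ℤ × ℤ) : detZ c a = -detZ a c := by
  unfold detZ; ring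

lemma detZ_zero_right (a : ℤ × ℤ) : detZ a 0 = 0 := by
  simp [detZ]

lemma detZ_sum_right {ι : Type*} (s : Finset ι) (a : ℤ × ℤ) (c : ι → ℤ × ℤ) :
    detZ a (∑ j ∈ s, c j) = ∑ j ∈ s, detZ a (c j) := by
  simp only [detZ, Prod.fst_sum, Prod.snd_sum, Finset.mul_sum, Finset.sum_mul,
    Finset.sum_sub_distrib]

lemma continuous_det2_left (w : ℝ × ℝ) : Continuous fun x => det2 x w := by
  unfold det2; fun_prop

lemma continuous_det2_right (u : ℝ × ℝ) : Continuous fun x => det2 u x := by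
  unfold det2; fun_prop

lemma det2_eq_zero_of_mem_rayThru {v x y : ℝ × ℝ} (hx : x ∈ rayThru v) (hy : y ∈ rayThru v) :
    det2 x y = 0 := by
  obtain ⟨s, -, rfl⟩ := hx
  obtain ⟨t, -, rfl⟩ := hy
  simp only [det2, Prod.smul_fst, Prod.smul_snd, smul_eq_mul]; ring

lemma detZ_eq_zero_of_mem_rayThru {v : ℝ × ℝ} {a c : ℤ × ℤ} (ha : toR2 a ∈ rayThru v)
    (hc : toR2 c ∈ rayThru v) : detZ a c = 0 := by
  exact_mod_cast (det2_toR2 a c).symm.trans (det2_eq_zero_of_mem_rayThru ha hc)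

lemma mem_rayThru_symm {u v : ℝ × ℝ} (hv : v ≠ 0) (h : v ∈ rayThru u) : u ∈ rayThru v := by
  obtain ⟨t, ht, rfl⟩ := h
  have ht0 : t ≠ 0 := by rintro rfl; simp at hv
  exact ⟨t⁻¹, inv_nonneg.2 ht, by rw [smul_smul, inv_mul_cancel₀ ht0, one_smul]⟩

lemma det2_smul_add_smul_left (s t : ℝ) (u w : ℝ × ℝ) :
    det2 (s • u + t • w) w = s * det2 u w := by
  simp only [det2, Prod.fst_add, Prod.snd_add, Prod.smul_fst, Prod.smul_snd, smul_eq_mul]; ring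

lemma det2_smul_add_smul_right (s t : ℝ) (u w : ℝ × ℝ) :
    det2 u (s • u + t • w) = t * det2 u w := by
  simp only [det2, Prod.fst_add, Prod.snd_add, Prod.smul_fst, Prod.smul_snd, smul_eq_mul]; ring

/-- Cramer's rule. -/
lemma eq_det2_div_smul_add {u w : ℝ × ℝ} (hd : det2 u w ≠ 0) (x : ℝ × ℝ) :
    x = (det2 x w / det2 u w) • u + (det2 u x / det2 u w) • w := by
  ext <;> simp only [Prod.fst_add, Prod.snd_add, Prod.smul_fst, Prod.smul_snd, smul_eq_mul] <;>
    field_simp <;> unfold det2 <;> ring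

lemma mem_posCone_iff {u w : ℝ × ℝ} (hd : det2 u w ≠ 0) (x : ℝ × ℝ) :
    x ∈ posCone u w ↔ 0 ≤ det2 u w * det2 x w ∧ 0 ≤ det2 u w * det2 u x := by
  constructor
  · rintro ⟨s, t, hs, ht, rfl⟩
    rw [det2_smul_add_smul_left, det2_smul_add_smul_right]
    constructor <;> nlinarith [mul_self_nonneg (det2 u w)]
  · rintro ⟨h1, h2⟩
    have hsq : 0 < det2 u w * det2 u w := mul_self_pos.2 hd
    refine ⟨_, _, ?_, ?_, eq_det2_div_smul_add hd x⟩
    · rw [← mul_div_mul_left _ _ hd]; exact div_nonneg h1 hsq.le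
    · rw [← mul_div_mul_left _ _ hd]; exact div_nonneg h2 hsq.le

lemma posCone_comm (u w : ℝ × ℝ) : posCone u w = posCone w u := by
  ext x
  constructor <;> rintro ⟨s, t, hs, ht, rfl⟩ <;> exact ⟨t, s, ht, hs, add_comm _ _⟩

lemma isClosed_posCone {u w : ℝ × ℝ} (hd : det2 u w ≠ 0) : IsClosed (posCone u w) := by
  have : posCone u w =
      {x | 0 ≤ det2 u w * det2 x w} ∩ {x | 0 ≤ det2 u w * det2 u x} :=
    Set.ext (mem_posCone_iff hd)
  rw [this]
  exact (isClosed_le continuous_const (continuous_const.mul (continuous_det2_left w))).inter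
    (isClosed_le continuous_const (continuous_const.mul (continuous_det2_right u)))

lemma mul_det2_pos_of_mem_posCone {u w x : ℝ × ℝ} (hd : det2 u w ≠ 0) (hx : x ∈ posCone u w)
    (hxu : x ∉ rayThru u) (hxw : x ∉ rayThru w) :
    0 < det2 u w * det2 x w ∧ 0 < det2 u w * det2 u x := by
  obtain ⟨s, t, hs, ht, rfl⟩ := hx
  have hs0 : s ≠ 0 := by rintro rfl; exact hxw ⟨t, ht, by simp⟩
  have ht0 : t ≠ 0 := by rintro rfl; exact hxu ⟨s, hs, by simp⟩
  rw [det2_smul_add_smul_left, det2_smul_add_smul_right]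
  constructor <;> nlinarith [mul_self_pos.2 hd, lt_of_le_of_ne hs (Ne.symm hs0),
    lt_of_le_of_ne ht (Ne.symm ht0)]

lemma isOpen_setOf_mul_det2_pos (u w : ℝ × ℝ) :
    IsOpen {x | 0 < det2 u w * det2 x w ∧ 0 < det2 u w * det2 u x} :=
  (isOpen_lt continuous_const (continuous_const.mul (continuous_det2_left w))).inter
    (isOpen_lt continuous_const (continuous_const.mul (continuous_det2_right u)))

/-- Off its two boundary rays, `posCone u w` is open, so a connected set avoiding those rays
lies either inside the cone or outside it. -/
lemma closure_subset_posCone {u w : ℝ × ℝ} (hd : det2 u w ≠ 0) {Ω : Set (ℝ × ℝ)}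
    (hΩ : IsPreconnected Ω) (hΩu : Disjoint Ω (rayThru u)) (hΩw : Disjoint Ω (rayThru w))
    (hmeet : (Ω ∩ posCone u w).Nonempty) : closure Ω ⊆ posCone u w := by
  set O := {x | 0 < det2 u w * det2 x w ∧ 0 < det2 u w * det2 u x}
  have hOP : O ⊆ posCone u w := fun x hx => (mem_posCone_iff hd x).2 ⟨hx.1.le, hx.2.le⟩
  have hPO : ∀ x ∈ Ω, x ∈ posCone u w → x ∈ O := fun x hxΩ hx =>
    mul_det2_pos_of_mem_posCone hd hx (hΩu.notMem_of_mem_left hxΩ) (hΩw.notMem_of_mem_left hxΩ)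
  have hΩO : Ω ⊆ O ∪ (posCone u w)ᶜ := fun x hx =>
    (em (x ∈ posCone u w)).imp (hPO x hx) id
  obtain ⟨x, hxΩ, hxP⟩ := hmeet
  refine closure_minimal (subset_trans ?_ hOP) (isClosed_posCone hd)
  exact hΩ.subset_left_of_subset_union (isOpen_setOf_mul_det2_pos u w)
    (isClosed_posCone hd).isOpen_compl (Set.disjoint_compl_right_iff_subset.2 hOP) hΩO
    ⟨x, hxΩ, hPO x hxΩ hxP⟩

namespace IsSecCone

variable {N : ℕ} {b : Fin N → ℝ × ℝ} {C : Set (ℝ × ℝ)}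

lemma exists_eq_closure (hC : IsSecCone b C) :
    ∃ Ω, IsPreconnected Ω ∧ (∀ i, Disjoint Ω (rayThru (b i))) ∧ C = closure Ω := by
  obtain ⟨x, -, rfl⟩ := hC
  refine ⟨_, isPreconnected_connectedComponentIn, fun i => ?_, rfl⟩
  exact Set.disjoint_left.2 fun y hy hyi =>
    connectedComponentIn_subset _ _ hy (Set.mem_iUnion.2 ⟨i, hyi⟩)

/-- A secondary cone through `b i` lying on the side `ε` of the line `ℝ b i` is contained in
`posCone (b i) (b j)` exactly when `b j` lies on that side too. -/
lemma subset_posCone_iff (hC : IsSecCone b C) {i j : Fin N} (hd : det2 (b i) (b j) ≠ 0)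
    (hiC : b i ∈ C) {ε : ℝ} (hε : ε ≠ 0) (hside : ∀ x ∈ C, 0 ≤ ε * det2 (b i) x) :
    C ⊆ posCone (b i) (b j) ↔ 0 < ε * det2 (b i) (b j) := by
  obtain ⟨Ω, hΩ, hdisj, rfl⟩ := hC.exists_eq_closure
  set d := det2 (b i) (b j)
  constructor
  · intro hsub
    obtain ⟨x, hx⟩ := closure_nonempty_iff.1 ⟨_, hiC⟩
    have hpos := (mul_det2_pos_of_mem_posCone hd (hsub (subset_closure hx))
      ((hdisj i).notMem_of_mem_left hx) ((hdisj j).notMem_of_mem_left hx)).2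
    have hεx := hside x (subset_closure hx)
    have hεd : 0 ≤ ε * d := nonneg_of_mul_nonneg_left (by nlinarith [mul_self_nonneg d]) hpos
    exact lt_of_le_of_ne hεd (mul_ne_zero hε hd).symm
  · intro hεd
    have hu : b i ∈ {x | 0 < d * det2 x (b j)} := mul_self_pos.2 hd
    obtain ⟨x, hxd, hxΩ⟩ := mem_closure_iff.1 hiC _
      (isOpen_lt continuous_const (continuous_const.mul (continuous_det2_left _))) hu
    have hεx := hside x (subset_closure hxΩ)
    have hdx : 0 ≤ d * det2 (b i) x := nonneg_of_mul_nonneg_right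
      (by nlinarith [mul_nonneg (mul_self_nonneg d) hεx]) hεd
    exact closure_subset_posCone hd hΩ (hdisj i) (hdisj j)
      ⟨x, hxΩ, (mem_posCone_iff hd x).2 ⟨hxd.le, hdx⟩⟩

lemma subset_posCone_of_mem (hC : IsSecCone b C) {i j : Fin N} (hd : det2 (b i) (b j) ≠ 0)
    {v : ℝ × ℝ} (hvC : v ∈ C) (hv : v ∈ posCone (b i) (b j)) (hvi : v ∉ rayThru (b i))
    (hvj : v ∉ rayThru (b j)) : C ⊆ posCone (b i) (b j) := by
  obtain ⟨Ω, hΩ, hdisj, rfl⟩ := hC.exists_eq_closure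
  obtain ⟨x, hxO, hxΩ⟩ := mem_closure_iff.1 hvC _ (isOpen_setOf_mul_det2_pos _ _)
    (mul_det2_pos_of_mem_posCone hd hv hvi hvj)
  exact closure_subset_posCone hd hΩ (hdisj i) (hdisj j)
    ⟨x, hxΩ, (mem_posCone_iff hd x).2 ⟨hxO.1.le, hxO.2.le⟩⟩

end IsSecCone

lemma sum_lt_smul_single_add_single_apply {ι : Type*} [Fintype ι] [LinearOrder ι]
    (f : ι → ι → ℤ) (hf : ∀ i j, f i j = f j i) (hf0 : ∀ i, f i i = 0) (k : ι) :
    (∑ i, ∑ j, if i < j then f i j • (Pi.single i 1 + Pi.single j 1 : ι → ℤ) else 0) k =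
      ∑ j, f k j := by
  set g : ι → ι → ℤ := fun i j => if i < j then f i j else 0
  have hg : ∀ i j, (if i < j then f i j • (Pi.single i 1 + Pi.single j 1 : ι → ℤ) else 0) =
      g i j • (Pi.single i 1 + Pi.single j 1) := by
    intro i j; by_cases hij : i < j <;> simp [g, hij]
  have hgf : ∀ j, g k j + g j k = f k j := by
    intro j
    rcases lt_trichotomy k j with h | rfl | h
    · simp [g, h, h.not_gt]
    · simp [g, hf0]
    · simp [g, h, h.not_gt, hf j k]
  calc (∑ i, ∑ j, if i < j then f i j • (Pi.single i 1 + Pi.single j 1 : ι → ℤ) else 0) k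
      = ∑ i, ∑ j, (g i j * (Pi.single i 1 : ι → ℤ) k + g i j * (Pi.single j 1 : ι → ℤ) k) := by
        simp only [hg, Finset.sum_apply, Pi.smul_apply, Pi.add_apply, smul_eq_mul, mul_add]
    _ = ∑ j, g k j + ∑ i, g i k := by
        simp only [Finset.sum_add_distrib, Pi.single_apply, mul_ite, mul_one, mul_zero,
          Finset.sum_ite_irrel, Finset.sum_const_zero, Finset.sum_ite_eq, Finset.mem_univ, if_true]
    _ = ∑ j, f k j := by
        rw [← Finset.sum_add_distrib]; exact Finset.sum_congr rfl fun j _ => hgf j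

/-- The coefficient `|det(b i, b j)|` of `e i + e j` in `ψ_C`, present when `{i, j} ∈ L_C`. -/
def pairCoeff {N : ℕ} (b : Fin N → ℤ × ℤ) (C : Set (ℝ × ℝ)) (i j : Fin N) : ℤ :=
  if C ⊆ posCone (toR2 (b i)) (toR2 (b j)) then |detZ (b i) (b j)| else 0

lemma pairCoeff_comm {N : ℕ} (b : Fin N → ℤ × ℤ) (C : Set (ℝ × ℝ)) (i j : Fin N) :
    pairCoeff b C i j = pairCoeff b C j i := by
  simp only [pairCoeff, posCone_comm (toR2 (b i)), detZ_comm (b i), abs_neg]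

lemma psiC_apply {N : ℕ} (b : Fin N → ℤ × ℤ) (C : Set (ℝ × ℝ)) (k : Fin N) :
    psiC b C k = ∑ j, pairCoeff b C k j := by
  have hterm : ∀ i j, (if i < j ∧ C ⊆ posCone (toR2 (b i)) (toR2 (b j)) then
      |detZ (b i) (b j)| • (Pi.single i 1 + Pi.single j 1 : Fin N → ℤ) else 0) =
      if i < j then pairCoeff b C i j • (Pi.single i 1 + Pi.single j 1) else 0 := by
    intro i j
    unfold pairCoeff
    split_ifs <;> simp_all
  simp only [psiC, hterm]
  exact sum_lt_smul_single_add_single_apply _ (pairCoeff_comm b C)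
    (fun i => by simp [pairCoeff, detZ]) k

section SecondaryCones

variable {N : ℕ} {b : Fin N → ℤ × ℤ} {C C' : Set (ℝ × ℝ)}

lemma pairCoeff_sub_pairCoeff_of_mem (hC : IsSecCone (fun i => toR2 (b i)) C)
    (hC' : IsSecCone (fun i => toR2 (b i)) C') {i : Fin N} (hiC : toR2 (b i) ∈ C)
    (hiC' : toR2 (b i) ∈ C') (hright : ∀ x ∈ C, det2 (toR2 (b i)) x ≤ 0)
    (hleft : ∀ x ∈ C', 0 ≤ det2 (toR2 (b i)) x) (j : Fin N) :
    pairCoeff b C' i j - pairCoeff b C i j = detZ (b i) (b j) := by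
  by_cases hD : detZ (b i) (b j) = 0
  · simp [pairCoeff, hD]
  have hd : det2 (toR2 (b i)) (toR2 (b j)) ≠ 0 := by rw [det2_toR2]; exact_mod_cast hD
  have h' := hC'.subset_posCone_iff hd hiC' one_ne_zero (by simpa using hleft)
  have h := hC.subset_posCone_iff hd hiC (neg_ne_zero.2 one_ne_zero) (by simpa using hright)
  simp only [det2_toR2, one_mul, neg_one_mul, Int.cast_pos, neg_pos, Int.cast_lt_zero] at h h'
  simp only [pairCoeff, h, h']
  rcases lt_or_gt_of_ne hD with hneg | hpos
  · simp [hneg, hneg.not_gt, abs_of_neg hneg]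
  · simp [hpos, hpos.not_gt, abs_of_pos hpos]

lemma pairCoeff_eq_of_mem (hC : IsSecCone (fun i => toR2 (b i)) C)
    (hC' : IsSecCone (fun i => toR2 (b i)) C') {v : ℝ × ℝ} (hvC : v ∈ C) (hvC' : v ∈ C')
    {i j : Fin N} (hvi : v ∉ rayThru (toR2 (b i))) (hvj : v ∉ rayThru (toR2 (b j))) :
    pairCoeff b C i j = pairCoeff b C' i j := by
  by_cases hD : detZ (b i) (b j) = 0
  · simp [pairCoeff, hD]
  have hd : det2 (toR2 (b i)) (toR2 (b j)) ≠ 0 := by rw [det2_toR2]; exact_mod_cast hD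
  have hiff : C ⊆ posCone (toR2 (b i)) (toR2 (b j)) ↔ C' ⊆ posCone (toR2 (b i)) (toR2 (b j)) :=
    ⟨fun h => hC'.subset_posCone_of_mem hd hvC' (h hvC) hvi hvj,
      fun h => hC.subset_posCone_of_mem hd hvC (h hvC') hvi hvj⟩
  simp only [pairCoeff, hiff]

end SecondaryCones

theorem stmt11_general (N : ℕ) (b : Fin N → ℤ × ℤ)
    (hsum : ∑ i, b i = 0)
    (C C' : Set (ℝ × ℝ))
    (hC : IsSecCone (fun i => toR2 (b i)) C)
    (hC' : IsSecCone (fun i => toR2 (b i)) C')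
    (ρ : Set (ℝ × ℝ)) (hρ : ρ = C ∩ C')
    (hray : ∃ v : ℝ × ℝ, v ≠ 0 ∧ ρ = rayThru v)
    (hright : ∀ i, toR2 (b i) ∈ ρ → ∀ x ∈ C, det2 (toR2 (b i)) x ≤ 0)
    (hleft : ∀ i, toR2 (b i) ∈ ρ → ∀ x ∈ C', 0 ≤ det2 (toR2 (b i)) x) :
    psiC b C' - psiC b C =
      fun k => ∑ i, if toR2 (b i) ∈ ρ then detZ (b i) (b k) else 0 := by
  obtain ⟨v, hv0, rfl⟩ := hray
  have hv : v ∈ C ∩ C' := hρ ▸ ⟨1, zero_le_one, (one_smul ℝ v).symm⟩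
  have hon : ∀ i, toR2 (b i) ∈ rayThru v → ∀ j,
      pairCoeff b C' i j - pairCoeff b C i j = detZ (b i) (b j) := fun i hi =>
    have hiCC' : toR2 (b i) ∈ C ∩ C' := hρ ▸ hi
    pairCoeff_sub_pairCoeff_of_mem hC hC' hiCC'.1 hiCC'.2 (hright i hi) (hleft i hi)
  funext k
  rw [Pi.sub_apply, psiC_apply, psiC_apply, ← Finset.sum_sub_distrib]
  by_cases hk : toR2 (b k) ∈ rayThru v
  · rw [Finset.sum_congr rfl fun j _ => hon k hk j, ← detZ_sum_right, hsum, detZ_zero_right]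
    refine (Finset.sum_eq_zero fun i _ => ?_).symm
    split_ifs with hi
    exacts [detZ_eq_zero_of_mem_rayThru hi hk, rfl]
  · refine Finset.sum_congr rfl fun j _ => ?_
    rw [pairCoeff_comm b C', pairCoeff_comm b C]
    split_ifs with hj
    · exact hon j hj k
    · rw [pairCoeff_eq_of_mem hC hC' hv.1 hv.2 (mt (mem_rayThru_symm hv0) hj)
        (mt (mem_rayThru_symm hv0) hk), sub_self]

/-- if `C`, `C'` are adjacent 2-dimensional cones of the secondary fan
meeting in the ray `ρ`, with `C` to the right and `C'` to the left of `ρ`, and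
`I = {i : b i ∈ ρ}`, then `ψ_{C'} − ψ_C = Σ_{i ∈ I} Σ_k det(b i, b k)·e k`. -/
theorem stmt11 (N : ℕ) (b : Fin N → ℤ × ℤ)
    (hnz : ∀ i, b i ≠ 0)
    (hspan : Submodule.span ℝ (Set.range fun i => toR2 (b i)) = ⊤)
    (hsum : ∑ i, b i = 0)
    (C C' : Set (ℝ × ℝ))
    (hC : IsSecCone (fun i => toR2 (b i)) C)
    (hC' : IsSecCone (fun i => toR2 (b i)) C')
    (ρ : Set (ℝ × ℝ)) (hρ : ρ = C ∩ C')
    (hray : ∃ v : ℝ × ℝ, v ≠ 0 ∧ ρ = rayThru v)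
    (hright : ∀ i, toR2 (b i) ∈ ρ → ∀ x ∈ C, det2 (toR2 (b i)) x ≤ 0)
    (hleft : ∀ i, toR2 (b i) ∈ ρ → ∀ x ∈ C', 0 ≤ det2 (toR2 (b i)) x) :
    psiC b C' - psiC b C =
      fun k => ∑ i, if toR2 (b i) ∈ ρ then detZ (b i) (b k) else 0 :=
  stmt11_general N b hsum C C' hC hC' ρ hρ hray hright hleft
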